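/- Let ϖ₁, ϖ₂, ϖ₃ and ϖ'₁, ϖ'₂, ϖ'₃ be two triples of pairwise distinct elements of the dual space (ℝ²)*, each triple lying on an affine line not passing through 0. Then there exists g ∈ GL₂(ℝ) whose transpose action sends ϖᵢ to ϖ'ᵢ for i = 1, 2, 3 if and only if (ϖ₁ - ϖ₃)/(ϖ₁ - ϖ₂) = (ϖ'₁ - ϖ'₃)/(ϖ'₁ - ϖ'₂), where these ratios denote the unique real scalar t with ϖ₁ - ϖ₃ = t·(ϖ₁ - ϖ₂) (which exists by collinearity). -/
import Mathlib

noncomputable section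

abbrev D := Module.Dual ℝ (Fin 2 → ℝ)

lemma indep {φ ψ : D} (hψ : ψ ≠ 0) (h0 : ∀ t : ℝ, φ + t • ψ ≠ 0) {t₁ t₂ : ℝ} (ht : t₁ ≠ t₂) :
    LinearIndependent ℝ ![φ + t₁ • ψ, φ + t₂ • ψ] := by
  rw [LinearIndependent.pair_iff]
  intro s t hst
  have key : (s + t) • φ + (s * t₁ + t * t₂) • ψ = 0 := by
    rw [← hst]; module
  have hst0 : s + t = 0 := by
    by_contra h
    apply h0 ((s * t₁ + t * t₂) / (s + t))
    have e : φ + ((s * t₁ + t * t₂) / (s + t)) • ψ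
        = (s + t)⁻¹ • ((s + t) • φ + (s * t₁ + t * t₂) • ψ) := by
      rw [smul_add, smul_smul, smul_smul, inv_mul_cancel₀ h, one_smul, div_eq_inv_mul]
    rw [e, key, smul_zero]
  have hmul : s * (t₁ - t₂) = 0 := by
    have hts : t = -s := by linarith
    subst hts
    have : (s * t₁ + -s * t₂) • ψ = 0 := by simpa [hst0] using key
    rcases smul_eq_zero.1 this with h | h
    · nlinarith [h]
    · exact absurd h hψ
  have hs : s = 0 := by
    rcases mul_eq_zero.1 hmul with h | h
    · exact h
    · exact absurd (by linarith) ht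
  exact ⟨hs, by linarith [hst0]⟩

lemma finrankD : Module.finrank ℝ D = 2 := by
  rw [Subspace.dual_finrank_eq]; simp

lemma exists_g (G : D ≃ₗ[ℝ] D) :
    ∃ g : (Fin 2 → ℝ) ≃ₗ[ℝ] (Fin 2 → ℝ),
      ∀ w : D, w.comp (g : (Fin 2 → ℝ) →ₗ[ℝ] (Fin 2 → ℝ)) = G w := by
  refine ⟨(Module.evalEquiv ℝ (Fin 2 → ℝ)).trans
    (G.dualMap.trans (Module.evalEquiv ℝ (Fin 2 → ℝ)).symm), fun w => ?_⟩
  ext v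
  simp [Module.apply_evalEquiv_symm_apply]

/-- Two triples of pairwise distinct linear forms on `ℝ²`, each lying on an
affine line avoiding `0`, are in the same `GL₂(ℝ)`-orbit (for the transpose
action, i.e. precomposition) iff the ratios `(ϖ₁-ϖ₃)/(ϖ₁-ϖ₂)` agree. -/
theorem stmt7 (w₁ w₂ w₃ w₁' w₂' w₃' : Module.Dual ℝ (Fin 2 → ℝ))
    (hd : w₁ ≠ w₂ ∧ w₁ ≠ w₃ ∧ w₂ ≠ w₃)
    (hd' : w₁' ≠ w₂' ∧ w₁' ≠ w₃' ∧ w₂' ≠ w₃')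
    (hline : ∃ (φ ψ : Module.Dual ℝ (Fin 2 → ℝ)) (t₁ t₂ t₃ : ℝ),
      w₁ = φ + t₁ • ψ ∧ w₂ = φ + t₂ • ψ ∧ w₃ = φ + t₃ • ψ ∧
      ∀ t : ℝ, φ + t • ψ ≠ 0)
    (hline' : ∃ (φ ψ : Module.Dual ℝ (Fin 2 → ℝ)) (t₁ t₂ t₃ : ℝ),
      w₁' = φ + t₁ • ψ ∧ w₂' = φ + t₂ • ψ ∧ w₃' = φ + t₃ • ψ ∧
      ∀ t : ℝ, φ + t • ψ ≠ 0) :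
    (∃ g : (Fin 2 → ℝ) ≃ₗ[ℝ] (Fin 2 → ℝ),
      w₁' = w₁.comp (g : (Fin 2 → ℝ) →ₗ[ℝ] (Fin 2 → ℝ)) ∧
      w₂' = w₂.comp (g : (Fin 2 → ℝ) →ₗ[ℝ] (Fin 2 → ℝ)) ∧
      w₃' = w₃.comp (g : (Fin 2 → ℝ) →ₗ[ℝ] (Fin 2 → ℝ))) ↔
    (∃ t : ℝ, w₁ - w₃ = t • (w₁ - w₂) ∧ w₁' - w₃' = t • (w₁' - w₂')) := by
  obtain ⟨h12, h13, h23⟩ := hd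
  obtain ⟨h12', h13', h23'⟩ := hd'
  obtain ⟨φ, ψ, t₁, t₂, t₃, e1, e2, e3, h0⟩ := hline
  obtain ⟨φ', ψ', s₁, s₂, s₃, e1', e2', e3', h0'⟩ := hline'
  have hψ : ψ ≠ 0 := by
    rintro rfl; exact h12 (by rw [e1, e2, smul_zero, smul_zero])
  have hψ' : ψ' ≠ 0 := by
    rintro rfl; exact h12' (by rw [e1', e2', smul_zero, smul_zero])
  have ht12 : t₁ ≠ t₂ := by
    rintro rfl; exact h12 (by rw [e1, e2])
  have hs12 : s₁ ≠ s₂ := by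
    rintro rfl; exact h12' (by rw [e1', e2'])
  have d13 : w₁ - w₃ = (t₁ - t₃) • ψ := by rw [e1, e3]; module
  have d12 : w₁ - w₂ = (t₁ - t₂) • ψ := by rw [e1, e2]; module
  constructor
  · rintro ⟨g, hg1, hg2, hg3⟩
    refine ⟨(t₁ - t₃) / (t₁ - t₂), ?_, ?_⟩
    · rw [d13, d12, smul_smul, div_mul_cancel₀ _ (sub_ne_zero.2 ht12)]
    · rw [hg1, hg2, hg3, ← LinearMap.sub_comp, ← LinearMap.sub_comp,
        d13, d12, LinearMap.smul_comp, LinearMap.smul_comp, smul_smul,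
        div_mul_cancel₀ _ (sub_ne_zero.2 ht12)]
  · rintro ⟨t, ht, ht'⟩
    have li : LinearIndependent ℝ ![w₁, w₂] := by
      rw [e1, e2]; exact indep hψ h0 ht12
    have li' : LinearIndependent ℝ ![w₁', w₂'] := by
      rw [e1', e2']; exact indep hψ' h0' hs12
    have hcard : Fintype.card (Fin 2) = Module.finrank ℝ D := by
      rw [finrankD]; simp
    let b := basisOfLinearIndependentOfCardEqFinrank li hcard
    let b' := basisOfLinearIndependentOfCardEqFinrank li' hcard
    have hb : ⇑b = ![w₁, w₂] := coe_basisOfLinearIndependentOfCardEqFinrank li hcard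
    have hb' : ⇑b' = ![w₁', w₂'] := coe_basisOfLinearIndependentOfCardEqFinrank li' hcard
    let G : D ≃ₗ[ℝ] D := b.equiv b' (Equiv.refl _)
    have hG1 : G w₁ = w₁' := by
      have := b.equiv_apply (e := Equiv.refl (Fin 2)) 0 b'
      rw [hb, hb'] at this
      simpa using this
    have hG2 : G w₂ = w₂' := by
      have := b.equiv_apply (e := Equiv.refl (Fin 2)) 1 b'
      rw [hb, hb'] at this
      simpa using this
    have hG3 : G w₃ = w₃' := by
      have h3 : w₃ = w₁ - t • (w₁ - w₂) := by rw [← ht]; abel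
      have h3' : w₃' = w₁' - t • (w₁' - w₂') := by rw [← ht']; abel
      rw [h3, h3', map_sub, map_smul, map_sub, hG1, hG2]
    obtain ⟨g, hg⟩ := exists_g G
    exact ⟨g, (hg w₁).symm ▸ hG1.symm, (hg w₂).symm ▸ hG2.symm, (hg w₃).symm ▸ hG3.symm⟩
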